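/- In a standard gambling game where the gambling house Γ of Player 1 is weakly acyclic (and Λ is leavable), every balanced continuous function v: X×Y → ℝ is excessive and depressive. -/

import Mathlib

open MeasureTheory Set Filter Topology

noncomputable section
namespace GG

abbrev PM (S : Type*) [MeasurableSpace S] := MeasureTheory.ProbabilityMeasure S

variable {S : Type*} [MeasurableSpace S]

/-- Dirac probability measure. -/
def dirac (s : S) : PM S := ⟨MeasureTheory.Measure.dirac s, inferInstance⟩

/-- Integral of a function against a probability measure (the affine extension `f̃`). -/
def iPM (f : S → ℝ) (p : PM S) : ℝ := ∫ s, f s ∂(p : MeasureTheory.Measure S)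

/-- `r` is the mixture `t p + (1-t) q`. -/
def IsMix (t : NNReal) (p q r : PM S) : Prop :=
  (r : MeasureTheory.Measure S)
    = (t : ENNReal) • (p : MeasureTheory.Measure S)
      + ((1 : ENNReal) - (t : ENNReal)) • (q : MeasureTheory.Measure S)

/-- Convexity of a set of probability measures. -/
def PMConvex (A : Set (PM S)) : Prop :=
  ∀ p ∈ A, ∀ q ∈ A, ∀ t : NNReal, t ≤ 1 → ∀ r : PM S, IsMix t p q r → r ∈ A

/-- Convexity of a set of pairs of probability measures. -/
def PMConvex2 (A : Set (PM S × PM S)) : Prop :=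
  ∀ a ∈ A, ∀ b ∈ A, ∀ t : NNReal, t ≤ 1 → ∀ c : PM S × PM S,
    IsMix t a.1 b.1 c.1 → IsMix t a.2 b.2 c.2 → c ∈ A

/-- Convex hull of a set of probability measures. -/
def convexHullPM (A : Set (PM S)) : Set (PM S) := ⋂₀ {T | A ⊆ T ∧ PMConvex T}

/-- Convex hull of a set of pairs of probability measures. -/
def convexHull2 (A : Set (PM S × PM S)) : Set (PM S × PM S) := ⋂₀ {T | A ⊆ T ∧ PMConvex2 T}

/-- Kantorovich–Rubinstein distance. -/
def dKR {S : Type*} [MeasurableSpace S] [PseudoMetricSpace S] (p q : PM S) : ℝ :=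
  sSup {r | ∃ f : S → ℝ, LipschitzWith 1 f ∧ r = |iPM f p - iPM f q|}

def argmaxOn {α : Type*} (f : α → ℝ) (A : Set α) : Set α := {p ∈ A | ∀ q ∈ A, f q ≤ f p}

def argminOn {α : Type*} (f : α → ℝ) (A : Set α) : Set α := {p ∈ A | ∀ q ∈ A, f p ≤ f q}

section Topo

variable [TopologicalSpace S] [OpensMeasurableSpace S]

/-- Graph of the linear extension `Γ̃`: the closed convex hull of the graph of `Γ`. -/
def tGraph (Γ : S → Set (PM S)) : Set (PM S × PM S) :=
  closure (convexHull2 {z | ∃ x : S, z.1 = dirac x ∧ z.2 ∈ Γ x})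

/-- The linear extension `Γ̃ : Δ(S) ⇉ Δ(S)`. -/
def tStep (Γ : S → Set (PM S)) (p : PM S) : Set (PM S) := {q | (p, q) ∈ tGraph Γ}

/-- Iterates `Γ̃ⁿ`, with `Γ̃⁰(p) = {p}` and `Γ̃^{n+1} = Γ̃ⁿ ∘ Γ̃`. -/
def tIter (Γ : S → Set (PM S)) : ℕ → PM S → Set (PM S)
  | 0, p => {p}
  | n + 1, p => {r | ∃ q ∈ tStep Γ p, r ∈ tIter Γ n q}

/-- The reachable set `Γ^∞(x)`: closure of `⋃ₙ Γ̃ⁿ(δ_x)`. -/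
def reach (Γ : S → Set (PM S)) (x : S) : Set (PM S) :=
  closure (⋃ n : ℕ, tIter Γ n (dirac x))

/-- There is a bounded measurable lower semicontinuous `φ` whose (expectation) argmax over
`R x` is exactly `{δ_x}`, for every `x`. -/
def AcyclicFor (R : S → Set (PM S)) : Prop :=
  ∃ φ : S → ℝ, Measurable φ ∧ (∃ C : ℝ, ∀ s, |φ s| ≤ C) ∧ LowerSemicontinuous φ ∧
    ∀ x : S, argmaxOn (iPM φ) (R x) = {dirac x}

/-- There is a bounded measurable upper semicontinuous `ψ` whose (expectation) argmin over
`R y` is exactly `{δ_y}`, for every `y`. -/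
def AcyclicForMin (R : S → Set (PM S)) : Prop :=
  ∃ ψ : S → ℝ, Measurable ψ ∧ (∃ C : ℝ, ∀ s, |ψ s| ≤ C) ∧ UpperSemicontinuous ψ ∧
    ∀ y : S, argminOn (iPM ψ) (R y) = {dirac y}

end Topo

section TwoPlayers

variable {X Y : Type*} [MeasurableSpace X] [MeasurableSpace Y]

/-- The bi-affine extension `ṽ(p,q) = ∫∫ v dp dq`. -/
def iXY (v : X × Y → ℝ) (p : PM X) (q : PM Y) : ℝ :=
  ∫ x, ∫ y, v (x, y) ∂(q : MeasureTheory.Measure Y) ∂(p : MeasureTheory.Measure X)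

/-- `v` is excessive: `v(x,y) = max_{p ∈ Γ(x)} ṽ(p,y)`. -/
def Excessive (Γ : X → Set (PM X)) (v : X × Y → ℝ) : Prop :=
  ∀ x : X, ∀ y : Y, IsGreatest ((fun p => iXY v p (dirac y)) '' Γ x) (v (x, y))

/-- `v` is depressive: `v(x,y) = min_{q ∈ Λ(y)} ṽ(x,q)`. -/
def Depressive (Λ : Y → Set (PM Y)) (v : X × Y → ℝ) : Prop :=
  ∀ x : X, ∀ y : Y, IsLeast ((fun q => iXY v (dirac x) q) '' Λ y) (v (x, y))

/-- `v` is balanced: `v(x,y) = max_{p ∈ Γ(x)} min_{q ∈ Λ(y)} ṽ(p,q)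
    = min_{q ∈ Λ(y)} max_{p ∈ Γ(x)} ṽ(p,q)`. -/
def Balanced (Γ : X → Set (PM X)) (Λ : Y → Set (PM Y)) (v : X × Y → ℝ) : Prop :=
  ∀ x : X, ∀ y : Y,
    IsGreatest {r | ∃ p ∈ Γ x, IsLeast (iXY v p '' Λ y) r} (v (x, y)) ∧
    IsLeast {r | ∃ q ∈ Λ y, IsGreatest ((fun p => iXY v p q) '' Γ x) r} (v (x, y))

variable [TopologicalSpace X] [OpensMeasurableSpace X] [TopologicalSpace Y] [OpensMeasurableSpace Y]

/-- Property P1: for all `(x,y)` there is `p ∈ Γ^∞(x)` with `v(x,y) = ṽ(p,y) ≤ ũ(p,y)`. -/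
def P1 (Γ : X → Set (PM X)) (u v : X × Y → ℝ) : Prop :=
  ∀ x : X, ∀ y : Y, ∃ p ∈ reach Γ x,
    v (x, y) = iXY v p (dirac y) ∧ iXY v p (dirac y) ≤ iXY u p (dirac y)

/-- Property P2: for all `(x,y)` there is `q ∈ Λ^∞(y)` with `v(x,y) = ṽ(x,q) ≥ ũ(x,q)`. -/
def P2 (Λ : Y → Set (PM Y)) (u v : X × Y → ℝ) : Prop :=
  ∀ x : X, ∀ y : Y, ∃ q ∈ reach Λ y,
    v (x, y) = iXY v (dirac x) q ∧ iXY u (dirac x) q ≤ iXY v (dirac x) q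

/-- `w` satisfies the Shapley fixed point equation for discount factor `lam`:
`w(x,y) = max_{p∈Γ(x)} min_{q∈Λ(y)} (λ u(x,y) + (1-λ) w̃(p,q))
        = min_{q∈Λ(y)} max_{p∈Γ(x)} (λ u(x,y) + (1-λ) w̃(p,q))`. -/
def ShapleyEq (Γ : X → Set (PM X)) (Λ : Y → Set (PM Y)) (u : X × Y → ℝ)
    (lam : ℝ) (w : X × Y → ℝ) : Prop :=
  ∀ x : X, ∀ y : Y,
    IsGreatest {r | ∃ p ∈ Γ x,
      IsLeast ((fun q => lam * u (x, y) + (1 - lam) * iXY w p q) '' Λ y) r} (w (x, y)) ∧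
    IsLeast {r | ∃ q ∈ Λ y,
      IsGreatest ((fun p => lam * u (x, y) + (1 - lam) * iXY w p q) '' Γ x) r} (w (x, y))

end TwoPlayers

/-- A standard gambling game: compact metric state spaces, continuous payoff,
continuous transition multifunctions with nonempty convex compact values,
leavable and non expansive. -/
structure StdGame (X Y : Type*) [MetricSpace X] [MeasurableSpace X] [OpensMeasurableSpace X]
    [MetricSpace Y] [MeasurableSpace Y] [OpensMeasurableSpace Y] where
  G : X → Set (PM X)
  L : Y → Set (PM Y)
  u : X × Y → ℝ
  u_cont : Continuous u
  G_ne : ∀ x, (G x).Nonempty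
  G_cvx : ∀ x, PMConvex (G x)
  G_cpt : ∀ x, IsCompact (G x)
  G_cont : ∀ ε : ℝ, 0 < ε → ∃ α : ℝ, 0 < α ∧ ∀ x x' : X, dist x x' ≤ α →
    ∀ p ∈ G x, ∃ p' ∈ G x', dKR p p' ≤ ε
  G_leav : ∀ x, dirac x ∈ G x
  G_nonexp : ∀ x x' : X, ∀ p ∈ G x, ∃ p' ∈ G x', dKR p p' ≤ dist x x'
  L_ne : ∀ y, (L y).Nonempty
  L_cvx : ∀ y, PMConvex (L y)
  L_cpt : ∀ y, IsCompact (L y)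
  L_cont : ∀ ε : ℝ, 0 < ε → ∃ α : ℝ, 0 < α ∧ ∀ y y' : Y, dist y y' ≤ α →
    ∀ q ∈ L y, ∃ q' ∈ L y', dKR q q' ≤ ε
  L_leav : ∀ y, dirac y ∈ L y
  L_nonexp : ∀ y y' : Y, ∀ q ∈ L y, ∃ q' ∈ L y', dKR q q' ≤ dist y y'

end GG

/-!
Let `E (x, y) = max_{p ∈ Γ x} ṽ (p, y) - v (x, y)` and
`D (x, y) = v (x, y) - min_{q ∈ Λ y} ṽ (x, q)` be the excessive and depressive gaps of `v`.
Non-expansiveness makes them continuous: for a Lipschitz payoff the one-step value is Lipschitz by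
the Kantorovich–Rubinstein bound, and a continuous payoff is a uniform limit of Lipschitz ones.

Balancedness lets each gap be paid only by the other one: against the move `q` with which
player 2 holds player 1 to `v (x, y)`, a best move `p ≠ δ_x` of player 1 gives
`E (x, y) ≤ ∫ D (·, y) dp`, and symmetrically a best move `q` of player 2 gives
`D (x, y) ≤ ∫ E (x, ·) dq`.

If `max E D` were positive somewhere, then for the acyclicity potential `φ` and small `ε > 0` the
upper semicontinuous function `max E D - ε φ` would attain its maximum `s` where `max E D > 0`.
The second transfer moves the maximiser to a point `(x, y)` with `E (x, y) = s + ε φ x`, and the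
first then gives `E (x, y) ≤ s + ε φ̃ p < s + ε φ x`, because `φ̃ p < φ x` for `p ∈ Γ x` other
than `δ_x`.
-/

namespace GG

section ProbabilityMeasure

variable {S : Type*} [TopologicalSpace S] [CompactSpace S] [MeasurableSpace S]
  [OpensMeasurableSpace S]

lemma integrable_of_continuous {f : S → ℝ} (hf : Continuous f) (μ : Measure S)
    [IsFiniteMeasure μ] : Integrable f μ :=
  hf.integrable_of_hasCompactSupport (HasCompactSupport.of_compactSpace f)

lemma continuous_iPM {f : S → ℝ} (hf : Continuous f) : Continuous (iPM f) :=
  ProbabilityMeasure.continuous_integral_continuousMap (⟨f, hf⟩ : C(S, ℝ))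

lemma continuous_parametric_iPM {A : Type*} [TopologicalSpace A] [FirstCountableTopology A]
    [LocallyCompactSpace A] {F : A → S → ℝ} (hF : Continuous (Function.uncurry F))
    (p : PM S) : Continuous fun a => iPM (F a) p := by
  simpa [iPM] using continuous_parametric_integral_of_continuous (μ := (p : Measure S)) hF
    isCompact_univ

end ProbabilityMeasure

lemma iPM_le_iPM_add {S : Type*} [MeasurableSpace S] {f g : S → ℝ} {p : PM S}
    (hf : Integrable f (p : Measure S)) (hg : Integrable g (p : Measure S)) {c : ℝ}
    (h : ∀ s, f s ≤ g s + c) : iPM f p ≤ iPM g p + c :=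
  calc iPM f p ≤ ∫ s, (g s + c) ∂(p : Measure S) :=
        integral_mono hf (hg.add (integrable_const c)) h
    _ = iPM g p + c := by simp [integral_add hg (integrable_const c), iPM]

lemma iPM_dirac {S : Type*} [MeasurableSpace S] [MeasurableSingletonClass S] (f : S → ℝ)
    (s : S) : iPM f (dirac s) = f s :=
  integral_dirac f s

lemma iPM_lt_of_argmaxOn_eq {S : Type*} [MeasurableSpace S] [MeasurableSingletonClass S]
    {φ : S → ℝ} {A : Set (PM S)} {s : S} (h : argmaxOn (iPM φ) A = {dirac s}) {p : PM S}
    (hp : p ∈ A) (hne : p ≠ dirac s) : iPM φ p < φ s := by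
  have hmax : dirac s ∈ argmaxOn (iPM φ) A := h ▸ rfl
  have hp' : p ∉ argmaxOn (iPM φ) A := h ▸ hne
  simp only [argmaxOn, mem_ofPred_eq, not_and, not_forall, not_le] at hp'
  obtain ⟨q, hq, hlt⟩ := hp' hp
  exact iPM_dirac φ s ▸ hlt.trans_le (hmax.2 q hq)

section Lipschitz

variable {S : Type*} [MetricSpace S] [CompactSpace S]

lemma exists_lipschitzWith_abs_sub_le {f : S → ℝ} (hf : Continuous f) {δ : ℝ}
    (hδ : 0 < δ) :
    ∃ (K : NNReal) (g : S → ℝ), LipschitzWith K g ∧ ∀ x, |f x - g x| ≤ δ := by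
  obtain ⟨C, hC⟩ := isCompact_univ.exists_bound_of_continuousOn hf.continuousOn
  replace hC : ∀ x, |f x| ≤ C := fun x => hC x (mem_univ x)
  obtain ⟨η, hη, hmod⟩ := Metric.uniformContinuous_iff.1
    (CompactSpace.uniformContinuous_of_continuous hf) δ hδ
  obtain ⟨n, hn⟩ := exists_nat_gt (2 * C / η)
  have hn0 : (0 : ℝ) ≤ n := n.cast_nonneg
  have hnη : 2 * C ≤ n * η := by rw [div_lt_iff₀ hη] at hn; linarith
  set g : S → ℝ := fun x => ⨅ y, f y + n * dist x y
  have hbdd : ∀ x, BddBelow (range fun y => f y + n * dist x y) := fun x =>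
    ⟨-C, by
      rintro _ ⟨y, rfl⟩
      nlinarith [(abs_le.1 (hC y)).1, dist_nonneg (x := x) (y := y)]⟩
  have hg_le : ∀ x y, g x ≤ f y + n * dist x y := fun x y => ciInf_le (hbdd x) y
  have hg_ge : ∀ x, f x - δ ≤ g x := fun x =>
    have : Nonempty S := ⟨x⟩
    le_ciInf fun y => by
      rcases lt_or_ge (dist x y) η with hxy | hxy
      · nlinarith [(abs_lt.1 (hmod hxy)).2, dist_nonneg (x := x) (y := y)]
      · nlinarith [(abs_le.1 (hC x)).2, (abs_le.1 (hC y)).1]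
  have hg_lip : LipschitzWith n g := by
    refine LipschitzWith.of_le_add_mul n fun x x' => ?_
    have : Nonempty S := ⟨x⟩
    have : g x - n * dist x x' ≤ g x' := le_ciInf fun y => by
      nlinarith [hg_le x y, dist_triangle x x' y]
    push_cast
    linarith
  refine ⟨n, g, hg_lip, fun x => abs_le.2 ⟨?_, by linarith [hg_ge x]⟩⟩
  have := hg_le x x
  simp only [dist_self, mul_zero, add_zero] at this
  linarith

variable [MeasurableSpace S] [BorelSpace S]

lemma iPM_sub_iPM_le_diam {f : S → ℝ} (hf : LipschitzWith 1 f) (p q : PM S) :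
    iPM f p - iPM f q ≤ Metric.diam (univ : Set S) := by
  have hi := integrable_of_continuous hf.continuous
  obtain ⟨s, hs⟩ := exists_integral_le (hi (p : Measure S))
  obtain ⟨t, ht⟩ := exists_le_integral (hi (q : Measure S))
  calc iPM f p - iPM f q ≤ f s - f t := sub_le_sub hs ht
    _ ≤ dist s t := by simpa [Real.dist_eq] using (le_abs_self _).trans (hf.dist_le_mul s t)
    _ ≤ _ := Metric.dist_le_diam_of_mem Metric.isBounded_of_compactSpace (mem_univ s) (mem_univ t)

lemma abs_iPM_sub_le_mul_dKR {f : S → ℝ} {K : NNReal} (hf : LipschitzWith K f) (p q : PM S) :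
    |iPM f p - iPM f q| ≤ K * dKR p q := by
  rcases eq_or_ne K 0 with rfl | hK
  · obtain ⟨s⟩ := nonempty_of_isProbabilityMeasure (p : Measure S)
    have hconst : ∀ x, f x = f s := fun x => by simpa using hf.dist_le_mul x s
    simp [iPM, hconst]
  have hK' : (0 : ℝ) < K := by positivity
  have h1 : LipschitzWith 1 fun s => f s / K := LipschitzWith.of_dist_le_mul fun x y => by
    rw [Real.dist_eq, ← sub_div, abs_div, abs_of_pos hK', div_le_iff₀ hK', ← Real.dist_eq]
    simpa [mul_comm] using hf.dist_le_mul x y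
  have hbdd : BddAbove {r | ∃ f : S → ℝ, LipschitzWith 1 f ∧ r = |iPM f p - iPM f q|} :=
    ⟨_, by
      rintro _ ⟨f, hf, rfl⟩
      exact abs_sub_le_iff.2 ⟨iPM_sub_iPM_le_diam hf p q, iPM_sub_iPM_le_diam hf q p⟩⟩
  have := le_csSup hbdd ⟨_, h1, rfl⟩
  simp only [iPM, integral_div, ← sub_div, abs_div, abs_of_pos hK'] at this
  rwa [div_le_iff₀ hK', mul_comm] at this

end Lipschitz

section StepSup

variable {S T : Type*} [MeasurableSpace S]

def stepSup (Γ : S → Set (PM S)) (f : S × T → ℝ) (z : S × T) : ℝ :=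
  sSup ((fun p => iPM (fun s => f (s, z.2)) p) '' Γ z.1)

variable {Γ : S → Set (PM S)} {f g : S × T → ℝ}

lemma stepSup_le {z : S × T} (hne : (Γ z.1).Nonempty) {b : ℝ}
    (h : ∀ p ∈ Γ z.1, iPM (fun s => f (s, z.2)) p ≤ b) : stepSup Γ f z ≤ b :=
  csSup_le (hne.image _) (forall_mem_image.2 h)

variable [MetricSpace S] [CompactSpace S] [BorelSpace S] [MetricSpace T]

lemma le_stepSup (hf : Continuous f) {z : S × T} {p : PM S} (hp : p ∈ Γ z.1) :
    iPM (fun s => f (s, z.2)) p ≤ stepSup Γ f z :=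
  le_csSup ((isCompact_range (continuous_iPM (by fun_prop))).bddAbove.mono
    (image_subset_range _ _)) (mem_image_of_mem _ hp)

lemma exists_mem_iPM_eq_stepSup (hf : Continuous f) {z : S × T} (hne : (Γ z.1).Nonempty)
    (hcpt : IsCompact (Γ z.1)) : ∃ p ∈ Γ z.1, iPM (fun s => f (s, z.2)) p = stepSup Γ f z :=
  (hcpt.image (continuous_iPM (by fun_prop))).sSup_mem (hne.image _)

lemma stepSup_le_stepSup_add (hf : Continuous f) (hg : Continuous g) (hne : ∀ s, (Γ s).Nonempty)
    {c : ℝ} (h : ∀ w, f w ≤ g w + c) (z : S × T) : stepSup Γ f z ≤ stepSup Γ g z + c :=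
  stepSup_le (hne z.1) fun p hp =>
    (iPM_le_iPM_add (integrable_of_continuous (by fun_prop) _)
      (integrable_of_continuous (by fun_prop) _) fun s => h (s, z.2)).trans
      (by linarith [le_stepSup hg hp])

lemma lipschitzWith_stepSup {K : NNReal} (hf : LipschitzWith K f) (hne : ∀ s, (Γ s).Nonempty)
    (hΓ : ∀ s s' : S, ∀ p ∈ Γ s, ∃ p' ∈ Γ s', dKR p p' ≤ dist s s') :
    LipschitzWith (2 * K) (stepSup Γ f) := by
  have hfc := hf.continuous
  refine LipschitzWith.of_le_add_mul _ fun z z' => stepSup_le (hne z.1) fun p hp => ?_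
  obtain ⟨p', hp', hpp'⟩ := hΓ z.1 z'.1 p hp
  have hfs : LipschitzWith K fun s => f (s, z.2) := by
    have := hf.comp (LipschitzWith.prodMk_right z.2)
    rwa [mul_one] at this
  have hS := (abs_le.1 (abs_iPM_sub_le_mul_dKR hfs p p')).2
  have hT : iPM (fun s => f (s, z.2)) p' ≤ iPM (fun s => f (s, z'.2)) p' + K * dist z.2 z'.2 :=
    iPM_le_iPM_add (integrable_of_continuous (by fun_prop) _)
      (integrable_of_continuous (by fun_prop) _) fun s => by
        have := (hf.comp (LipschitzWith.prodMk_left s)).dist_le_mul z.2 z'.2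
        simp only [Function.comp_apply, mul_one, Real.dist_eq] at this
        linarith [le_abs_self (f (s, z.2) - f (s, z'.2))]
  have h1 : dist z.1 z'.1 ≤ dist z z' := by rw [Prod.dist_eq]; exact le_max_left _ _
  have h2 : dist z.2 z'.2 ≤ dist z z' := by rw [Prod.dist_eq]; exact le_max_right _ _
  have := le_stepSup hfc hp'
  push_cast
  nlinarith [K.coe_nonneg]

lemma continuous_stepSup [CompactSpace T] (hf : Continuous f) (hne : ∀ s, (Γ s).Nonempty)
    (hΓ : ∀ s s' : S, ∀ p ∈ Γ s, ∃ p' ∈ Γ s', dKR p p' ≤ dist s s') :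
    Continuous (stepSup Γ f) := by
  refine continuous_of_uniform_approx_of_continuous fun u hu => ?_
  obtain ⟨δ, hδ, hδu⟩ := Metric.mem_uniformity_dist.1 hu
  obtain ⟨K, g, hg, hfg⟩ := exists_lipschitzWith_abs_sub_le hf (half_pos hδ)
  refine ⟨stepSup Γ g, (lipschitzWith_stepSup hg hne hΓ).continuous, fun z => hδu ?_⟩
  have hfg' := fun w => abs_le.1 (hfg w)
  have h1 := stepSup_le_stepSup_add hf hg.continuous hne (c := δ / 2)
    (fun w => by linarith [hfg' w]) z
  have h2 := stepSup_le_stepSup_add hg.continuous hf hne (c := δ / 2)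
    (fun w => by linarith [hfg' w]) z
  rw [Real.dist_eq, abs_lt]
  constructor <;> linarith

end StepSup

section Transfer

variable {X Y : Type*} [TopologicalSpace X] [CompactSpace X] [MeasurableSpace X]
  [OpensMeasurableSpace X] [TopologicalSpace Y] [CompactSpace Y] [MeasurableSpace Y]
  [OpensMeasurableSpace Y] {E D : X × Y → ℝ} {φ : X → ℝ}

theorem not_isMaxOn_of_transfer (hE : Continuous E) (hD : Continuous D) (hφm : Measurable φ)
    {C : ℝ} (hC : ∀ x, |φ x| ≤ C)
    (hED : ∀ x y, 0 < E (x, y) →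
      ∃ p : PM X, iPM φ p < φ x ∧ E (x, y) ≤ iPM (fun x' => D (x', y)) p)
    (hDE : ∀ x y, ∃ q : PM Y, D (x, y) ≤ iPM (fun y' => E (x, y')) q) {ε : ℝ}
    (hε : 0 < ε) {m : X × Y} (hpos : 0 < max (E m) (D m)) :
    ¬IsMaxOn (fun w => max (E w) (D w) - ε * φ w.1) univ m := by
  intro hm
  set M := max (E m) (D m)
  have hmax : ∀ w, max (E w) (D w) ≤ ε * φ w.1 + (M - ε * φ m.1) := fun w => by
    linarith [show _ ≤ M - ε * φ m.1 from hm (mem_univ w)]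
  obtain ⟨y, hy⟩ : ∃ y, M ≤ E (m.1, y) := by
    rcases le_total (D m) (E m) with h | h
    · exact ⟨m.2, (max_eq_left h).le⟩
    obtain ⟨q, hq⟩ := hDE m.1 m.2
    obtain ⟨y, hy⟩ := exists_integral_le (μ := (q : Measure Y))
      (integrable_of_continuous (hE.comp (continuous_const.prodMk continuous_id)) _)
    exact ⟨y, (max_eq_right h).trans_le (hq.trans hy)⟩
  obtain ⟨p, hpφ, hpE⟩ := hED m.1 y (hpos.trans_le hy)
  have hφint : Integrable φ (p : Measure X) :=
    .of_bound hφm.aestronglyMeasurable C (ae_of_all _ fun x => hC x)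
  have hDp := iPM_le_iPM_add (f := fun x => D (x, y))
    (integrable_of_continuous (hD.comp (continuous_id.prodMk continuous_const)) _)
    (hφint.const_mul ε) fun x => (le_max_right _ _).trans (hmax (x, y))
  have hεφ : iPM (fun x => ε * φ x) p = ε * iPM φ p := integral_const_mul ε φ
  have : ε * iPM φ p < ε * φ m.1 := mul_lt_mul_of_pos_left hpφ hε
  linarith

theorem gaps_nonpos_of_transfer (hE : Continuous E) (hD : Continuous D) (hφm : Measurable φ)
    (hφb : ∃ C, ∀ x, |φ x| ≤ C) (hφ : LowerSemicontinuous φ)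
    (hED : ∀ x y, 0 < E (x, y) →
      ∃ p : PM X, iPM φ p < φ x ∧ E (x, y) ≤ iPM (fun x' => D (x', y)) p)
    (hDE : ∀ x y, ∃ q : PM Y, D (x, y) ≤ iPM (fun y' => E (x, y')) q) (z : X × Y) :
    E z ≤ 0 ∧ D z ≤ 0 := by
  obtain ⟨C, hC⟩ := hφb
  by_contra hz
  have hpos : 0 < max (E z) (D z) := by
    by_contra! h
    exact hz ⟨(le_max_left _ _).trans h, (le_max_right _ _).trans h⟩
  have hC0 : 0 ≤ C := (abs_nonneg _).trans (hC z.1)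
  set ε := max (E z) (D z) / (2 * C + 1)
  have hε : 0 < ε := by positivity
  have hεC : ε * (2 * C + 1) = max (E z) (D z) := div_mul_cancel₀ _ (by positivity)
  have hΨ : UpperSemicontinuous fun w : X × Y => max (E w) (D w) - ε * φ w.1 := by
    simp_rw [sub_eq_add_neg]
    exact (hE.max hD).upperSemicontinuous.add <|
      (continuous_const.mul continuous_id).neg.comp_lowerSemicontinuous_antitone
        (hφ.comp continuous_fst) fun _ _ hab => neg_le_neg (mul_le_mul_of_nonneg_left hab hε.le)
  obtain ⟨m, -, hm⟩ := (hΨ.upperSemicontinuousOn univ).exists_isMaxOn ⟨z, mem_univ z⟩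
    isCompact_univ
  refine not_isMaxOn_of_transfer hE hD hφm hC hED hDE hε ?_ hm
  have := hm (mem_univ z)
  simp only [mem_ofPred_eq] at this
  nlinarith [abs_le.1 (hC z.1), abs_le.1 (hC m.1)]

end Transfer

lemma iXY_dirac_right {X Y : Type*} [MeasurableSpace X] [MeasurableSpace Y]
    [MeasurableSingletonClass Y] (v : X × Y → ℝ) (p : PM X) (y : Y) :
    iXY v p (dirac y) = iPM (fun x => v (x, y)) p :=
  integral_congr_ae (ae_of_all _ fun x => integral_dirac (fun y' => v (x, y')) y)

lemma iXY_dirac_left {X Y : Type*} [MeasurableSpace X] [MeasurableSpace Y]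
    [MeasurableSingletonClass X] (v : X × Y → ℝ) (x : X) (q : PM Y) :
    iXY v (dirac x) q = iPM (fun y => v (x, y)) q :=
  integral_dirac _ x

section Excess

variable {X Y : Type*} [MeasurableSpace X] {Γ : X → Set (PM X)} {v : X × Y → ℝ}

def excessGap (Γ : X → Set (PM X)) (v : X × Y → ℝ) (z : X × Y) : ℝ :=
  stepSup Γ v z - v z

variable [MetricSpace X] [CompactSpace X] [BorelSpace X] [MetricSpace Y]

lemma continuous_excessGap [CompactSpace Y] (hv : Continuous v) (hne : ∀ x, (Γ x).Nonempty)
    (hΓ : ∀ x x' : X, ∀ p ∈ Γ x, ∃ p' ∈ Γ x', dKR p p' ≤ dist x x') :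
    Continuous (excessGap Γ v) :=
  (continuous_stepSup hv hne hΓ).sub hv

lemma iPM_sub_le_excessGap (hv : Continuous v) {x : X} {y : Y} {p : PM X} (hp : p ∈ Γ x) :
    iPM (fun x' => v (x', y)) p - v (x, y) ≤ excessGap Γ v (x, y) :=
  sub_le_sub_right (le_stepSup hv (z := (x, y)) hp) _

end Excess

section Depress

variable {X Y : Type*} [MeasurableSpace Y] {Λ : Y → Set (PM Y)} {v : X × Y → ℝ}

/-- `sup_{q ∈ Λ y} (v (x, y) - ṽ (x, q))`, written through `stepSup` for the payoff `-v` of the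
swapped game. -/
def depressGap (Λ : Y → Set (PM Y)) (v : X × Y → ℝ) (z : X × Y) : ℝ :=
  v z + stepSup Λ (fun w : Y × X => -v w.swap) z.swap

variable [MetricSpace X] [MetricSpace Y] [CompactSpace Y] [BorelSpace Y]

lemma continuous_depressGap [CompactSpace X] (hv : Continuous v) (hne : ∀ y, (Λ y).Nonempty)
    (hΛ : ∀ y y' : Y, ∀ q ∈ Λ y, ∃ q' ∈ Λ y', dKR q q' ≤ dist y y') :
    Continuous (depressGap Λ v) :=
  hv.add ((continuous_stepSup (by fun_prop) hne hΛ).comp continuous_swap)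

lemma sub_iPM_le_depressGap (hv : Continuous v) {x : X} {y : Y} {q : PM Y} (hq : q ∈ Λ y) :
    v (x, y) - iPM (fun y' => v (x, y')) q ≤ depressGap Λ v (x, y) := by
  have := le_stepSup (f := fun w : Y × X => -v w.swap) (by fun_prop) (z := (y, x)) hq
  simp only [iPM, Prod.swap_prod_mk, integral_neg] at this
  unfold depressGap iPM
  simp only [Prod.swap_prod_mk]
  linarith

end Depress

section Balanced

variable {X Y : Type*} [MetricSpace X] [CompactSpace X] [MeasurableSpace X] [BorelSpace X]
  [MetricSpace Y] [CompactSpace Y] [MeasurableSpace Y] [BorelSpace Y]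
  {Γ : X → Set (PM X)} {Λ : Y → Set (PM Y)} {v : X × Y → ℝ}

lemma iXY_eq_iPM_iPM_swap (hv : Continuous v) (p : PM X) (q : PM Y) :
    iXY v p q = iPM (fun y => iPM (fun x => v (x, y)) p) q :=
  integral_integral_swap (f := fun x y => v (x, y)) (integrable_of_continuous (by fun_prop) _)

lemma exists_ne_dirac_excessGap_le_iPM_depressGap (hv : Continuous v) (hbal : Balanced Γ Λ v)
    (hne : ∀ x, (Γ x).Nonempty) (hcpt : ∀ x, IsCompact (Γ x))
    (hD : Continuous (depressGap Λ v)) {x : X} {y : Y} (hpos : 0 < excessGap Γ v (x, y)) :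
    ∃ p ∈ Γ x, p ≠ dirac x ∧
      excessGap Γ v (x, y) ≤ iPM (fun x' => depressGap Λ v (x', y)) p := by
  obtain ⟨p, hp, hpE⟩ := exists_mem_iPM_eq_stepSup hv (z := (x, y)) (hne x) (hcpt x)
  obtain ⟨q, hq, -, hqv⟩ := (hbal x y).2.1
  have hE : excessGap Γ v (x, y) = iPM (fun x' => v (x', y)) p - v (x, y) := by
    rw [excessGap, ← hpE]
  refine ⟨p, hp, ?_, ?_⟩
  · rintro rfl
    rw [hE, iPM_dirac, sub_self] at hpos
    exact lt_irrefl 0 hpos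
  have hvy : Continuous fun x' => v (x', y) := by fun_prop
  have hw : Continuous fun x' => iPM (fun y' => v (x', y')) q :=
    continuous_parametric_iPM (F := fun x' y' => v (x', y')) (by fun_prop) q
  calc excessGap Γ v (x, y) ≤ iPM (fun x' => v (x', y)) p - iXY v p q := by
        linarith [hqv (mem_image_of_mem _ hp)]
    _ = iPM (fun x' => v (x', y) - iPM (fun y' => v (x', y')) q) p :=
        (integral_sub (integrable_of_continuous hvy _) (integrable_of_continuous hw _)).symm
    _ ≤ iPM (fun x' => depressGap Λ v (x', y)) p :=
        integral_mono (integrable_of_continuous (hvy.sub hw) _)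
          (integrable_of_continuous (hD.comp (continuous_id.prodMk continuous_const)) _)
          fun x' => sub_iPM_le_depressGap hv hq

lemma exists_depressGap_le_iPM_excessGap (hv : Continuous v) (hbal : Balanced Γ Λ v)
    (hne : ∀ y, (Λ y).Nonempty) (hcpt : ∀ y, IsCompact (Λ y))
    (hE : Continuous (excessGap Γ v)) (x : X) (y : Y) :
    ∃ q ∈ Λ y, depressGap Λ v (x, y) ≤ iPM (fun y' => excessGap Γ v (x, y')) q := by
  obtain ⟨q, hq, hqD⟩ := exists_mem_iPM_eq_stepSup (f := fun w : Y × X => -v w.swap)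
    (by fun_prop) (z := (y, x)) (hne y) (hcpt y)
  obtain ⟨p, hp, -, hpv⟩ := (hbal x y).1.1
  have hD : depressGap Λ v (x, y) = v (x, y) - iPM (fun y' => v (x, y')) q := by
    simp only [depressGap, Prod.swap_prod_mk, ← hqD, iPM, integral_neg]
    ring
  have hw : Continuous fun y' => iPM (fun x' => v (x', y')) p :=
    continuous_parametric_iPM (F := fun y' x' => v (x', y')) (by fun_prop) p
  refine ⟨q, hq, ?_⟩
  calc depressGap Λ v (x, y) ≤ iXY v p q - iPM (fun y' => v (x, y')) q := by
        linarith [hpv (mem_image_of_mem _ hq)]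
    _ = iPM (fun y' => iPM (fun x' => v (x', y')) p - v (x, y')) q := by
        rw [iXY_eq_iPM_iPM_swap hv]
        exact (integral_sub (integrable_of_continuous hw _)
          (integrable_of_continuous (by fun_prop) _)).symm
    _ ≤ iPM (fun y' => excessGap Γ v (x, y')) q :=
        integral_mono (integrable_of_continuous (hw.sub (by fun_prop)) _)
          (integrable_of_continuous (hE.comp (continuous_const.prodMk continuous_id)) _)
          fun y' => iPM_sub_le_excessGap hv hp

lemma excessive_of_excessGap_nonpos (hv : Continuous v) (hleav : ∀ x, dirac x ∈ Γ x)
    (h : ∀ z, excessGap Γ v z ≤ 0) : Excessive Γ v := fun x y =>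
  ⟨⟨dirac x, hleav x, (iXY_dirac_right v _ y).trans (iPM_dirac _ x)⟩,
    forall_mem_image.2 fun p hp => by
      rw [iXY_dirac_right]
      linarith [iPM_sub_le_excessGap hv (y := y) hp, h (x, y)]⟩

lemma depressive_of_depressGap_nonpos (hv : Continuous v) (hleav : ∀ y, dirac y ∈ Λ y)
    (h : ∀ z, depressGap Λ v z ≤ 0) : Depressive Λ v := fun x y =>
  ⟨⟨dirac y, hleav y, (iXY_dirac_left v x _).trans (iPM_dirac _ y)⟩,
    forall_mem_image.2 fun q hq => by
      rw [iXY_dirac_left]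
      linarith [sub_iPM_le_depressGap hv (x := x) hq, h (x, y)]⟩

end Balanced

theorem statement3_general
    {X Y : Type*} [MetricSpace X] [CompactSpace X]
    [MeasurableSpace X] [BorelSpace X]
    [MetricSpace Y] [CompactSpace Y]
    [MeasurableSpace Y] [BorelSpace Y]
    (g : StdGame X Y)
    (hwa : AcyclicFor g.G)
    (v : X × Y → ℝ) (hv : Continuous v) (hbal : Balanced g.G g.L v) :
    Excessive g.G v ∧ Depressive g.L v := by
  obtain ⟨φ, hφm, hφb, hφ, hargmax⟩ := hwa
  have hE := continuous_excessGap hv g.G_ne g.G_nonexp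
  have hD := continuous_depressGap hv g.L_ne g.L_nonexp
  have hgaps := gaps_nonpos_of_transfer hE hD hφm hφb hφ
    (fun x y hpos => by
      obtain ⟨p, hp, hpx, hpE⟩ :=
        exists_ne_dirac_excessGap_le_iPM_depressGap hv hbal g.G_ne g.G_cpt hD hpos
      exact ⟨p, iPM_lt_of_argmaxOn_eq (hargmax x) hp hpx, hpE⟩)
    (fun x y => by
      obtain ⟨q, -, hq⟩ := exists_depressGap_le_iPM_excessGap hv hbal g.L_ne g.L_cpt hE x y
      exact ⟨q, hq⟩)
  exact ⟨excessive_of_excessGap_nonpos hv g.G_leav fun z => (hgaps z).1,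
    depressive_of_depressGap_nonpos hv g.L_leav fun z => (hgaps z).2⟩

/-- in a standard gambling game where the gambling house of Player 1 is weakly
acyclic, every balanced continuous function is excessive and depressive. -/
theorem statement3
    {X Y : Type*} [MetricSpace X] [CompactSpace X] [Nonempty X]
    [MeasurableSpace X] [BorelSpace X]
    [MetricSpace Y] [CompactSpace Y] [Nonempty Y]
    [MeasurableSpace Y] [BorelSpace Y]
    (g : StdGame X Y)
    (hwa : AcyclicFor g.G)
    (v : X × Y → ℝ) (hv : Continuous v) (hbal : Balanced g.G g.L v) :
    Excessive g.G v ∧ Depressive g.L v :=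
  statement3_general g hwa v hv hbal

end GG
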